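/- Let α,β ∈ (0,1), α+β<1, ξ_n ↑ ∞, Λ = {n^{1−(α+β)}ξ_n}. Define h_N(x,y) = φ_N(x)φ_N(y)·sgn K_{2^{2N}}^{−α}(x)·sgn K_{2^{2N}}^{−β}(y) where φ_N is the sum of tent functions on dyadic intervals of length 2^{−2N}. Then the (C,−α,−β) Cesàro mean of h_N at (0,0) satisfies σ_{2^{2N},2^{2N}}^{−α,−β}(0,0;h_N) = ∫_0^1 φ_N|K_{2^{2N}}^{−α}| dx · ∫_0^1 φ_N|K_{2^{2N}}^{−β}| dy ≥ c(α,β)·2^{2N(α+β)}. -/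

import Mathlib

open MeasureTheory Filter Set ENNReal

noncomputable section

/-- The basic Rademacher-type function: 1 on [0,1/2), -1 on [1/2,1), 1-periodic. -/
def r0 (x : ℝ) : ℝ := if Int.fract x < 1/2 then 1 else -1

/-- The Walsh functions: products of Rademacher functions according to binary digits. -/
def walsh (k : ℕ) (x : ℝ) : ℝ :=
  ∏ j ∈ Finset.range k, if k.testBit j then r0 (2 ^ j * x) else 1

/-- The Walsh–Dirichlet kernel `D_n`. -/
def walshDirichlet (n : ℕ) (x : ℝ) : ℝ :=
  ∑ k ∈ Finset.range n, walsh k x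

/-- A finite ordered family of nonoverlapping subintervals of `[0,1)`. -/
structure IntervalPack (n : ℕ) where
  a : Fin n → ℝ
  b : Fin n → ℝ
  ha : ∀ i, 0 ≤ a i
  hab : ∀ i, a i < b i
  hb : ∀ i, b i ≤ 1
  disj : ∀ i j, i ≠ j → Disjoint (Ioo (a i) (b i)) (Ioo (a j) (b j))

/-- A family of nonoverlapping intervals together with a point `y i` for each interval. -/
structure SharpPack (n : ℕ) extends IntervalPack n where
  y : Fin n → ℝ
  hy : ∀ i, y i ∈ Ico (0:ℝ) 1

/-- The `Λ^#`-variation sum of `f` over a pack, with weight sequence shifted by `m`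
(weight `Λ (m+i)` for the `i`-th interval, `1`-based). -/
def sharpSum {n : ℕ} (Λ : ℕ → ℝ) (m : ℕ) (f : ℝ → ℝ → ℝ) (P : SharpPack n) : ℝ≥0∞ :=
  ∑ i : Fin n, ENNReal.ofReal
    (|f (P.b i) (P.y i) - f (P.a i) (P.y i)| / Λ (m + i.1 + 1))

/-- `Λ_m^# V_1 (f)`. -/
def sharpV1 (Λ : ℕ → ℝ) (m : ℕ) (f : ℝ → ℝ → ℝ) : ℝ≥0∞ :=
  ⨆ (n : ℕ) (P : SharpPack n), sharpSum Λ m f P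

/-- `Λ_m^# V_2 (f)`. -/
def sharpV2 (Λ : ℕ → ℝ) (m : ℕ) (f : ℝ → ℝ → ℝ) : ℝ≥0∞ :=
  sharpV1 Λ m (fun x y => f y x)

/-- `Λ_m^# V (f) = Λ_m^# V_1 (f) + Λ_m^# V_2 (f)`. -/
def sharpV (Λ : ℕ → ℝ) (m : ℕ) (f : ℝ → ℝ → ℝ) : ℝ≥0∞ :=
  sharpV1 Λ m f + sharpV2 Λ m f

/-- `f ∈ Λ^# BV`: bounded `Λ^#`-variation. -/
def SharpBV (Λ : ℕ → ℝ) (f : ℝ → ℝ → ℝ) : Prop := sharpV Λ 0 f ≠ ⊤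

/-- `f ∈ C Λ^# V`: continuity in `Λ^#`-variation, i.e. `Λ_m^# V (f) → 0`. -/
def CSharpV (Λ : ℕ → ℝ) (f : ℝ → ℝ → ℝ) : Prop :=
  Tendsto (fun m => sharpV Λ m f) atTop (nhds 0)

/-- `v_1^#(n, f)`: supremum of sums of `n` increments over `n` nonoverlapping
intervals, with freely chosen points `y_i`. -/
def vSharp1 (f : ℝ → ℝ → ℝ) (n : ℕ) : ℝ≥0∞ :=
  ⨆ (P : SharpPack n), ∑ i : Fin n,
    ENNReal.ofReal |f (P.b i) (P.y i) - f (P.a i) (P.y i)|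

def vSharp2 (f : ℝ → ℝ → ℝ) (n : ℕ) : ℝ≥0∞ := vSharp1 (fun x y => f y x) n

/-- `Λ V_1 (f)`: one fixed `y` for the whole family of intervals. -/
def lineV1 (Λ : ℕ → ℝ) (f : ℝ → ℝ → ℝ) : ℝ≥0∞ :=
  ⨆ (n : ℕ) (y : Ico (0:ℝ) 1) (P : IntervalPack n),
    ∑ i : Fin n, ENNReal.ofReal (|f (P.b i) (y : ℝ) - f (P.a i) (y : ℝ)| / Λ (i.1 + 1))

def lineV2 (Λ : ℕ → ℝ) (f : ℝ → ℝ → ℝ) : ℝ≥0∞ := lineV1 Λ (fun x y => f y x)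

/-- The mixed `(Λ¹,Λ²)`-variation `(Λ¹Λ²) V_{1,2}(f)`. -/
def mixedV (Λ₁ Λ₂ : ℕ → ℝ) (f : ℝ → ℝ → ℝ) : ℝ≥0∞ :=
  ⨆ (n : ℕ) (m : ℕ) (P : IntervalPack n) (Q : IntervalPack m),
    ∑ i : Fin n, ∑ j : Fin m, ENNReal.ofReal
      (|f (P.a i) (Q.a j) - f (P.a i) (Q.b j) - f (P.b i) (Q.a j) + f (P.b i) (Q.b j)| /
        (Λ₁ (i.1 + 1) * Λ₂ (j.1 + 1)))

/-- Harmonic bounded variation `HBV` in the sense of Hardy–Krause/Waterman type. -/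
def HBV (f : ℝ → ℝ → ℝ) : Prop :=
  lineV1 (fun n => (n : ℝ)) f + lineV2 (fun n => (n : ℝ)) f +
    mixedV (fun n => (n : ℝ)) (fun n => (n : ℝ)) f ≠ ⊤

/-- A finite family of nonoverlapping rectangles in `[0,1)²`. -/
structure RectPack (n : ℕ) where
  a : Fin n → ℝ
  b : Fin n → ℝ
  c : Fin n → ℝ
  d : Fin n → ℝ
  ha : ∀ i, 0 ≤ a i
  hab : ∀ i, a i < b i
  hb : ∀ i, b i ≤ 1
  hc : ∀ i, 0 ≤ c i
  hcd : ∀ i, c i < d i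
  hd : ∀ i, d i ≤ 1
  disj : ∀ i j, i ≠ j →
    Disjoint (Ioo (a i) (b i) ×ˢ Ioo (c i) (d i)) (Ioo (a j) (b j) ×ˢ Ioo (c j) (d j))

/-- The Dyachenko–Waterman rectangular variation `Λ* V (f)`. -/
def rectV (Λ : ℕ → ℝ) (f : ℝ → ℝ → ℝ) : ℝ≥0∞ :=
  ⨆ (n : ℕ) (R : RectPack n), ∑ i : Fin n, ENNReal.ofReal
    (|f (R.a i) (R.c i) - f (R.a i) (R.d i) - f (R.b i) (R.c i) + f (R.b i) (R.d i)| /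
      Λ (i.1 + 1))

/-- `q_N = 4^0 + 4^1 + ⋯ + 4^{N-1}`. -/
def qIdx (N : ℕ) : ℕ := ∑ k ∈ Finset.range N, 4 ^ k

/-- The tent function `φ_{N,j}` of height 1 on `[j 2^{-2N}, (j+1) 2^{-2N}]`. -/
def tent (N j : ℕ) (x : ℝ) : ℝ :=
  max 0 (1 - |2 ^ (2 * N + 1) * x - (2 * j + 1)|)

/-- `φ_N = ∑_{j=1}^{2^{2N}-1} φ_{N,j}`. -/
def tentSum (N : ℕ) (x : ℝ) : ℝ :=
  ∑ j ∈ Finset.Icc 1 (2 ^ (2 * N) - 1), tent N j x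

/-- `A_n^α = (α+1)(α+2)⋯(α+n)/n!`. -/
def Acoef (α : ℝ) (n : ℕ) : ℝ :=
  (∏ k ∈ Finset.range n, (α + k + 1)) / n.factorial

/-- The Cesàro `(C,α)` kernel for the Walsh system. -/
def cesaroKernel (α : ℝ) (n : ℕ) (x : ℝ) : ℝ :=
  (Acoef α (n - 1))⁻¹ * ∑ k ∈ Finset.Icc 1 n, Acoef (α - 1) (n - k) * walshDirichlet k x

/-- The `(n,m)`-th Walsh–Fourier coefficient of `f`. -/
def fourierCoef (f : ℝ → ℝ → ℝ) (n m : ℕ) : ℝ :=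
  ∫ x in (0:ℝ)..1, ∫ y in (0:ℝ)..1, f x y * walsh n x * walsh m y

/-- The rectangular partial sums of the double Walsh–Fourier series of `f`. -/
def partialSum (f : ℝ → ℝ → ℝ) (M N : ℕ) (x y : ℝ) : ℝ :=
  ∑ m ∈ Finset.range M, ∑ n ∈ Finset.range N, fourierCoef f m n * walsh m x * walsh n y

/-- The Cesàro `(C;α,β)` means of the double Walsh–Fourier series of `f`. -/
def cesaroMean (α β : ℝ) (n m : ℕ) (f : ℝ → ℝ → ℝ) (x y : ℝ) : ℝ :=
  (Acoef α (n - 1) * Acoef β (m - 1))⁻¹ *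
    ∑ i ∈ Finset.Icc 1 n, ∑ j ∈ Finset.Icc 1 m,
      Acoef (α - 1) (n - i) * Acoef (β - 1) (m - j) * partialSum f i j x y

/-- The sup norm of `f` over `[0,1]²` (in `ℝ≥0∞`). -/
def supNorm (f : ℝ → ℝ → ℝ) : ℝ≥0∞ :=
  ⨆ (x : Icc (0:ℝ) 1) (y : Icc (0:ℝ) 1), ENNReal.ofReal |f x y|

/-- The norm `‖f‖_C + Λ^# V (f)` on `C ∩ Λ^# BV` (in `ℝ≥0∞`). -/
def bvNorm (Λ : ℕ → ℝ) (f : ℝ → ℝ → ℝ) : ℝ≥0∞ :=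
  supNorm f + sharpV Λ 0 f

end
/-- The test function `h_N(x,y) = φ_N(x) φ_N(y) sgn K^{-α}_{2^{2N}}(x) sgn K^{-β}_{2^{2N}}(y)`. -/
noncomputable def hTest (α β : ℝ) (N : ℕ) (x y : ℝ) : ℝ :=
  tentSum N x * tentSum N y *
    Real.sign (cesaroKernel (-α) (2 ^ (2 * N)) x) *
    Real.sign (cesaroKernel (-β) (2 ^ (2 * N)) y)

/-! Since every Walsh function equals `1` at the origin and `h_N` is a tensor product, the Cesàro
mean of `h_N` at `(0,0)` splits into `∫ g_α K^{-α} · ∫ g_β K^{-β}` with `g_γ = φ_N sgn K^{-γ}`,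
and `g_γ K^{-γ} = φ_N |K^{-γ}|`.

For the lower bound let `n = 2^{2N}` and `Δ = w_{n-2} - w_{n-4}`. Both `K^{-γ}_n` and `Δ` are
constant on the dyadic intervals of length `1/n`, `φ_N` has mean `1/2` on each of them but the
first, and `Δ` vanishes on the first; hence `∫ Δ K ≤ 4 ∫ φ_N |K|`. By orthogonality of the Walsh
system, `∫ Δ K = (A^{-γ}_{n-1})⁻¹ (-A^{-γ-1}_2 - A^{-γ-1}_3) ≥ n^γ γ(1-γ)/2`. -/

lemma Real.sign_mul_self (r : ℝ) : Real.sign r * r = |r| := by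
  rcases lt_trichotomy r 0 with h | rfl | h
  · rw [Real.sign_of_neg h, abs_of_neg h, neg_one_mul]
  · simp
  · rw [Real.sign_of_pos h, abs_of_pos h, one_mul]

lemma Real.abs_sign_le_one (r : ℝ) : |Real.sign r| ≤ 1 := by
  rcases Real.sign_apply_eq r with h | h | h <;> simp [h]

lemma Real.measurable_sign : Measurable Real.sign :=
  Measurable.ite measurableSet_Iio measurable_const <|
    Measurable.ite measurableSet_Ioi measurable_const measurable_const

lemma IntervalIntegrable.mul_of_abs_le {f g : ℝ → ℝ} {a b C : ℝ}
    (hf : IntervalIntegrable f volume a b) (hg : Measurable g) (hgC : ∀ x, |g x| ≤ C) :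
    IntervalIntegrable (fun x => f x * g x) volume a b := by
  rw [intervalIntegrable_iff] at hf ⊢
  exact hf.mul_bdd hg.aestronglyMeasurable (ae_of_all _ hgC)

def IsDyadicStep (D : ℕ) (f : ℝ → ℝ) : Prop :=
  ∀ ⦃x y : ℝ⦄, ⌊2 ^ D * x⌋ = ⌊2 ^ D * y⌋ → f x = f y

namespace IsDyadicStep

variable {D D' : ℕ} {f g : ℝ → ℝ}

lemma const (D : ℕ) (c : ℝ) : IsDyadicStep D fun _ => c := fun _ _ _ => rfl

lemma mono (hf : IsDyadicStep D f) (hD : D ≤ D') : IsDyadicStep D' f := by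
  intro x y hxy
  apply hf
  have hpow : (2 : ℝ) ^ D' = 2 ^ D * ((2 ^ (D' - D) : ℕ) : ℝ) := by
    push_cast; rw [← pow_add, Nat.add_sub_cancel' hD]
  have key : ∀ z : ℝ, ⌊2 ^ D * z⌋ = ⌊2 ^ D' * z⌋ / ((2 ^ (D' - D) : ℕ) : ℤ) := fun z => by
    rw [← Int.floor_div_natCast, hpow]
    congr 1
    field_simp
  rw [key, key, hxy]

lemma comp (hf : IsDyadicStep D f) (φ : ℝ → ℝ) : IsDyadicStep D fun x => φ (f x) :=
  fun _ _ h => congrArg φ (hf h)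

lemma mul (hf : IsDyadicStep D f) (hg : IsDyadicStep D g) : IsDyadicStep D fun x => f x * g x :=
  fun _ _ h => congrArg₂ (· * ·) (hf h) (hg h)

lemma sub (hf : IsDyadicStep D f) (hg : IsDyadicStep D g) : IsDyadicStep D fun x => f x - g x :=
  fun _ _ h => congrArg₂ (· - ·) (hf h) (hg h)

lemma sum {ι : Type*} (s : Finset ι) {F : ι → ℝ → ℝ} (hF : ∀ i ∈ s, IsDyadicStep D (F i)) :
    IsDyadicStep D fun x => ∑ i ∈ s, F i x :=
  fun _ _ h => Finset.sum_congr rfl fun i hi => hF i hi h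

lemma prod {ι : Type*} (s : Finset ι) {F : ι → ℝ → ℝ} (hF : ∀ i ∈ s, IsDyadicStep D (F i)) :
    IsDyadicStep D fun x => ∏ i ∈ s, F i x :=
  fun _ _ h => Finset.prod_congr rfl fun i hi => hF i hi h

lemma floor_eq_of_mem_Ico {i : ℕ} {x : ℝ} (hx : x ∈ Ico ((i : ℝ) / 2 ^ D) ((i + 1) / 2 ^ D)) :
    ⌊2 ^ D * x⌋ = i := by
  have hpos : (0 : ℝ) < 2 ^ D := by positivity
  rw [Int.floor_eq_iff]
  obtain ⟨h₁, h₂⟩ := hx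
  rw [div_le_iff₀ hpos] at h₁
  rw [lt_div_iff₀ hpos] at h₂
  push_cast
  constructor <;> linarith

lemma eq_of_mem_Ico (hf : IsDyadicStep D f) {i : ℕ} {x : ℝ}
    (hx : x ∈ Ico ((i : ℝ) / 2 ^ D) ((i + 1) / 2 ^ D)) : f x = f (i / 2 ^ D) := by
  apply hf
  rw [floor_eq_of_mem_Ico hx, floor_eq_of_mem_Ico ⟨le_rfl, by gcongr; linarith⟩]

end IsDyadicStep

lemma integral_mul_of_isDyadicStep {D : ℕ} {h F : ℝ → ℝ} (hh : IntervalIntegrable h volume 0 1)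
    (hF : IsDyadicStep D F) :
    ∫ x in (0 : ℝ)..1, h x * F x = ∑ i ∈ Finset.range (2 ^ D),
      F (i / 2 ^ D) * ∫ x in (i / 2 ^ D : ℝ)..((i + 1) / 2 ^ D), h x := by
  set a : ℕ → ℝ := fun i => i / 2 ^ D with ha
  have ha_succ (i : ℕ) : a (i + 1) = ((i : ℝ) + 1) / 2 ^ D := by simp [ha]
  have ha_le (i : ℕ) : a i ≤ a (i + 1) := by rw [ha_succ]; simp only [ha]; gcongr; linarith
  have hcell (i : ℕ) : (fun x => h x * F x) =ᵐ[volume.restrict (uIoc (a i) (a (i + 1)))]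
      fun x => F (a i) * h x := by
    rw [uIoc_of_le (ha_le i), ← Measure.restrict_congr_set Ioo_ae_eq_Ioc]
    filter_upwards [ae_restrict_mem measurableSet_Ioo] with x hx
    rw [hF.eq_of_mem_Ico ⟨hx.1.le, (ha_succ i) ▸ hx.2⟩, mul_comm]
  have hh_cell {i : ℕ} (hi : i < 2 ^ D) : IntervalIntegrable h volume (a i) (a (i + 1)) := by
    refine hh.mono_set ?_
    rw [uIcc_of_le (ha_le i), uIcc_of_le zero_le_one, ha_succ]
    refine Icc_subset_Icc (by positivity) ?_
    rw [div_le_one (by positivity)]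
    exact_mod_cast hi
  have h0 : a 0 = 0 := by simp [ha]
  have h1 : a (2 ^ D) = 1 := by simp [ha]
  calc ∫ x in (0 : ℝ)..1, h x * F x
      = ∑ i ∈ Finset.range (2 ^ D), ∫ x in a i..a (i + 1), h x * F x := by
        rw [intervalIntegral.sum_integral_adjacent_intervals fun i hi =>
          ((hh_cell hi).const_mul _).congr_ae (hcell i).symm, h0, h1]
    _ = _ := Finset.sum_congr rfl fun i _ => by
        rw [intervalIntegral.integral_congr_ae_restrict (hcell i),
          intervalIntegral.integral_const_mul, ha_succ]

lemma integral_eq_sum_of_isDyadicStep {D : ℕ} {F : ℝ → ℝ} (hF : IsDyadicStep D F) :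
    ∫ x in (0 : ℝ)..1, F x = (∑ i ∈ Finset.range (2 ^ D), F (i / 2 ^ D)) / 2 ^ D := by
  rw [← one_mul (∫ x in (0 : ℝ)..1, F x), ← intervalIntegral.integral_const_mul,
    integral_mul_of_isDyadicStep intervalIntegrable_const hF, Finset.sum_div]
  refine Finset.sum_congr rfl fun i _ => ?_
  rw [intervalIntegral.integral_const, smul_eq_mul]
  ring

lemma r0_eq_ite_even_floor (x : ℝ) : r0 x = if Even ⌊2 * x⌋ then 1 else -1 := by
  set k := ⌊2 * x⌋
  have hfloor : ⌊x⌋ = k / 2 := by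
    simpa using Int.floor_div_natCast (2 * x) 2
  have hk₁ := Int.floor_le (2 * x)
  have hk₂ := Int.lt_floor_add_one (2 * x)
  have hdiv : ((k / 2 : ℤ) : ℝ) * 2 + ((k % 2 : ℤ) : ℝ) = k := by
    exact_mod_cast Int.ediv_mul_add_emod k 2
  unfold r0
  rw [Int.fract, hfloor]
  rcases Int.emod_two_eq_zero_or_one k with h | h
  · rw [if_pos (Int.even_iff.2 h), if_pos]
    rw [h] at hdiv; push_cast at hdiv; linarith
  · rw [if_neg (Int.not_even_iff.2 h), if_neg]
    rw [h] at hdiv; push_cast at hdiv; linarith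

lemma isDyadicStep_r0_two_pow_mul (j : ℕ) : IsDyadicStep (j + 1) fun x => r0 (2 ^ j * x) := by
  intro x y h
  simp only [r0_eq_ite_even_floor, ← mul_assoc, ← pow_succ', h]

lemma abs_r0_le (x : ℝ) : |r0 x| ≤ 1 := by
  unfold r0; split <;> norm_num

lemma r0_mul_self (x : ℝ) : r0 x * r0 x = 1 := by
  unfold r0; split <;> norm_num

lemma measurable_r0 : Measurable r0 :=
  Measurable.ite (measurableSet_lt measurable_fract measurable_const)
    measurable_const measurable_const

lemma integral_r0_two_pow_mul (p i : ℕ) :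
    ∫ x in (i / 2 ^ p : ℝ)..((i + 1) / 2 ^ p), r0 (2 ^ p * x) = 0 := by
  have hperiodic : Function.Periodic r0 1 := fun x => by simp only [r0, Int.fract_add_one]
  have hperiod : ∫ x in (0 : ℝ)..1, r0 x = 0 := by
    have hstep : IsDyadicStep 1 r0 := by simpa using isDyadicStep_r0_two_pow_mul 0
    rw [integral_eq_sum_of_isDyadicStep hstep]
    norm_num [Finset.sum_range_succ, r0]
  rw [intervalIntegral.integral_comp_mul_left r0 (by positivity), mul_div_cancel₀ _ (by positivity),
    mul_div_cancel₀ _ (by positivity), hperiodic.intervalIntegral_add_eq, zero_add, hperiod,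
    smul_zero]

lemma prod_range_testBit_r0_eq {D D' m : ℕ} (hD : D ≤ D') (hm : m < 2 ^ D) (x : ℝ) :
    ∏ j ∈ Finset.range D', (if m.testBit j then r0 (2 ^ j * x) else 1) =
      ∏ j ∈ Finset.range D, if m.testBit j then r0 (2 ^ j * x) else 1 := by
  refine (Finset.prod_subset (Finset.range_subset_range.2 hD) fun j _ hj => ?_).symm
  rw [Nat.testBit_lt_two_pow (hm.trans_le (Nat.pow_le_pow_right two_pos (by simpa using hj))),
    if_neg Bool.false_ne_true]

lemma walsh_eq_prod_range {D m : ℕ} (hm : m < 2 ^ D) (x : ℝ) :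
    walsh m x = ∏ j ∈ Finset.range D, if m.testBit j then r0 (2 ^ j * x) else 1 := by
  rcases le_total m D with h | h
  · exact (prod_range_testBit_r0_eq h Nat.lt_two_pow_self x).symm
  · exact prod_range_testBit_r0_eq h hm x

lemma isDyadicStep_prod_range_testBit_r0 (D m : ℕ) :
    IsDyadicStep D fun x => ∏ j ∈ Finset.range D, if m.testBit j then r0 (2 ^ j * x) else 1 := by
  refine IsDyadicStep.prod _ fun j hj => ?_
  split
  · exact (isDyadicStep_r0_two_pow_mul j).mono (Finset.mem_range.1 hj)
  · exact IsDyadicStep.const D 1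

lemma isDyadicStep_walsh {D m : ℕ} (hm : m < 2 ^ D) : IsDyadicStep D (walsh m) := by
  simpa only [← walsh_eq_prod_range hm] using isDyadicStep_prod_range_testBit_r0 D m

lemma walsh_apply_zero (m : ℕ) : walsh m 0 = 1 :=
  Finset.prod_eq_one fun j _ => by split <;> simp [r0]

lemma abs_walsh_le (m : ℕ) (x : ℝ) : |walsh m x| ≤ 1 := by
  rw [walsh, Finset.abs_prod]
  refine Finset.prod_le_one (fun _ _ => abs_nonneg _) fun j _ => ?_
  split
  · exact abs_r0_le _
  · simp

lemma measurable_walsh (m : ℕ) : Measurable (walsh m) :=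
  Finset.measurable_prod _ fun j _ => by
    split
    · exact measurable_r0.comp (measurable_const_mul _)
    · exact measurable_const

lemma walsh_mul_walsh (a b : ℕ) (x : ℝ) : walsh a x * walsh b x = walsh (a ^^^ b) x := by
  have ha : a < 2 ^ (a + b) :=
    Nat.lt_two_pow_self.trans_le (Nat.pow_le_pow_right two_pos (by omega))
  have hb : b < 2 ^ (a + b) :=
    Nat.lt_two_pow_self.trans_le (Nat.pow_le_pow_right two_pos (by omega))
  rw [walsh_eq_prod_range ha, walsh_eq_prod_range hb,
    walsh_eq_prod_range (Nat.xor_lt_two_pow ha hb), ← Finset.prod_mul_distrib]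
  refine Finset.prod_congr rfl fun j _ => ?_
  rcases ha' : a.testBit j <;> rcases hb' : b.testBit j <;>
    simp [Nat.testBit_xor, ha', hb', r0_mul_self]

lemma integral_walsh (s : ℕ) : ∫ x in (0 : ℝ)..1, walsh s x = if s = 0 then 1 else 0 := by
  rcases eq_or_ne s 0 with rfl | hs
  · simp [walsh]
  set p := s.log2
  have hsplit (x : ℝ) : walsh s x = r0 (2 ^ p * x) *
      ∏ j ∈ Finset.range p, if s.testBit j then r0 (2 ^ j * x) else 1 := by
    rw [walsh_eq_prod_range Nat.lt_log2_self, Finset.prod_range_succ, if_pos (Nat.testBit_log2 hs),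
      mul_comm]
  have hr0 : IntervalIntegrable (fun x => r0 (2 ^ p * x)) volume 0 1 := by
    simpa using (intervalIntegrable_const (c := (1 : ℝ))).mul_of_abs_le
      (measurable_r0.comp (measurable_const_mul _)) fun x => abs_r0_le (2 ^ p * x)
  simp only [hsplit, if_neg hs]
  rw [integral_mul_of_isDyadicStep hr0 (isDyadicStep_prod_range_testBit_r0 p s)]
  exact Finset.sum_eq_zero fun i _ => by rw [integral_r0_two_pow_mul, mul_zero]

lemma integral_walsh_mul_walsh (a b : ℕ) :
    ∫ x in (0 : ℝ)..1, walsh a x * walsh b x = if a = b then 1 else 0 := by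
  simp only [walsh_mul_walsh, integral_walsh, xor_eq_zero_iff]

lemma intervalIntegrable_walsh (m : ℕ) (a b : ℝ) : IntervalIntegrable (walsh m) volume a b := by
  simpa using (intervalIntegrable_const (c := (1 : ℝ))).mul_of_abs_le (measurable_walsh m)
    (abs_walsh_le m)

lemma isDyadicStep_cesaroKernel {D n : ℕ} (hn : n ≤ 2 ^ D) (γ : ℝ) :
    IsDyadicStep D (cesaroKernel γ n) :=
  (IsDyadicStep.const D _).mul <| IsDyadicStep.sum _ fun _ hk => (IsDyadicStep.const D _).mul <|
    IsDyadicStep.sum _ fun _ hm => isDyadicStep_walsh <|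
      (Finset.mem_range.1 hm).trans_le <| (Finset.mem_Icc.1 hk).2.trans hn

lemma measurable_cesaroKernel (γ : ℝ) (n : ℕ) : Measurable (cesaroKernel γ n) :=
  measurable_const.mul <| Finset.measurable_sum _ fun _ _ => measurable_const.mul <|
    Finset.measurable_sum _ fun m _ => measurable_walsh m

/-- The Cesàro mean at `0` of the Walsh–Fourier series of `g` is `∫ g K`. -/
lemma cesaro_sum_integral_mul_walsh {g : ℝ → ℝ} (hg : IntervalIntegrable g volume 0 1)
    (α : ℝ) (n : ℕ) :
    (Acoef α (n - 1))⁻¹ * ∑ k ∈ Finset.Icc 1 n, Acoef (α - 1) (n - k) *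
        ∑ m ∈ Finset.range k, ∫ x in (0 : ℝ)..1, g x * walsh m x =
      ∫ x in (0 : ℝ)..1, g x * cesaroKernel α n x := by
  have hgw (m : ℕ) : IntervalIntegrable (fun x => g x * walsh m x) volume 0 1 :=
    hg.mul_of_abs_le (measurable_walsh m) (abs_walsh_le m)
  have hpt (x : ℝ) : g x * cesaroKernel α n x = (Acoef α (n - 1))⁻¹ *
      ∑ k ∈ Finset.Icc 1 n, Acoef (α - 1) (n - k) * ∑ m ∈ Finset.range k, g x * walsh m x := by
    simp only [cesaroKernel, walshDirichlet, Finset.mul_sum]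
    ring_nf
  simp only [hpt]
  rw [intervalIntegral.integral_const_mul, intervalIntegral.integral_finsetSum fun k _ => ?_]
  · simp only [intervalIntegral.integral_const_mul,
      intervalIntegral.integral_finsetSum fun m _ => hgw m]
  · simpa only [Finset.sum_apply] using (IntervalIntegrable.sum _ fun m _ => hgw m).const_mul _

lemma fourierCoef_mul (f g : ℝ → ℝ) (m k : ℕ) :
    fourierCoef (fun x y => f x * g y) m k =
      (∫ x in (0 : ℝ)..1, f x * walsh m x) * ∫ y in (0 : ℝ)..1, g y * walsh k y := by
  simp only [fourierCoef, mul_right_comm (f _) (g _), mul_assoc (f _ * walsh m _),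
    intervalIntegral.integral_const_mul, intervalIntegral.integral_mul_const]

lemma partialSum_mul_apply_zero (f g : ℝ → ℝ) (M N : ℕ) :
    partialSum (fun x y => f x * g y) M N 0 0 =
      (∑ m ∈ Finset.range M, ∫ x in (0 : ℝ)..1, f x * walsh m x) *
        ∑ k ∈ Finset.range N, ∫ y in (0 : ℝ)..1, g y * walsh k y := by
  simp only [partialSum, fourierCoef_mul, walsh_apply_zero, mul_one, Finset.sum_mul_sum]

lemma cesaroMean_mul_apply_zero {f g : ℝ → ℝ} (hf : IntervalIntegrable f volume 0 1)
    (hg : IntervalIntegrable g volume 0 1) (α β : ℝ) (n m : ℕ) :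
    cesaroMean α β n m (fun x y => f x * g y) 0 0 =
      (∫ x in (0 : ℝ)..1, f x * cesaroKernel α n x) *
        ∫ y in (0 : ℝ)..1, g y * cesaroKernel β m y := by
  rw [← cesaro_sum_integral_mul_walsh hf, ← cesaro_sum_integral_mul_walsh hg, cesaroMean,
    mul_mul_mul_comm, ← mul_inv, Finset.sum_mul_sum]
  simp only [partialSum_mul_apply_zero]
  congr 1
  exact Finset.sum_congr rfl fun i _ => Finset.sum_congr rfl fun j _ => by ring

lemma Acoef_pos {α : ℝ} (hα : -1 < α) (m : ℕ) : 0 < Acoef α m :=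
  div_pos (Finset.prod_pos fun k _ => by linarith [(Nat.cast_nonneg k : (0 : ℝ) ≤ k)])
    (by exact_mod_cast m.factorial_pos)

lemma Acoef_two (α : ℝ) : Acoef α 2 = (α + 1) * (α + 2) / 2 := by
  simp only [Acoef, Finset.prod_range_succ, Finset.prod_range_zero, Nat.factorial]
  push_cast
  ring

lemma Acoef_three (α : ℝ) : Acoef α 3 = (α + 1) * (α + 2) * (α + 3) / 6 := by
  simp only [Acoef, Finset.prod_range_succ, Finset.prod_range_zero, Nat.factorial]
  push_cast
  ring

/-- `A_m^{-γ} = ∏_{k<m} (1 - γ/(k+1)) ≤ exp(-γ H_m) ≤ (m+1)^{-γ}`. -/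
lemma Acoef_neg_le_rpow {γ : ℝ} (hγ₀ : 0 ≤ γ) (hγ₁ : γ ≤ 1) (m : ℕ) :
    Acoef (-γ) m ≤ ((m : ℝ) + 1) ^ (-γ) := by
  have hprod : Acoef (-γ) m = ∏ k ∈ Finset.range m, (1 - γ / ((k : ℝ) + 1)) := by
    rw [Acoef, ← Finset.prod_range_add_one_eq_factorial, Nat.cast_prod, ← Finset.prod_div_distrib]
    refine Finset.prod_congr rfl fun k _ => ?_
    push_cast
    field_simp
    ring
  have hharmonic : Real.log ((m : ℝ) + 1) ≤ ∑ k ∈ Finset.range m, 1 / ((k : ℝ) + 1) := by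
    simpa [harmonic] using log_add_one_le_harmonic m
  calc Acoef (-γ) m
      ≤ ∏ k ∈ Finset.range m, Real.exp (-(γ / ((k : ℝ) + 1))) := by
        rw [hprod]
        refine Finset.prod_le_prod (fun k _ => ?_) fun k _ => ?_
        · rw [sub_nonneg, div_le_one (by positivity)]
          linarith [(Nat.cast_nonneg k : (0 : ℝ) ≤ k)]
        · linarith [Real.add_one_le_exp (-(γ / ((k : ℝ) + 1)))]
    _ = Real.exp (-γ * ∑ k ∈ Finset.range m, 1 / ((k : ℝ) + 1)) := by
        rw [← Real.exp_sum, Finset.mul_sum]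
        congr 1
        exact Finset.sum_congr rfl fun k _ => by ring
    _ ≤ Real.exp (-γ * Real.log ((m : ℝ) + 1)) :=
        Real.exp_le_exp.2 (mul_le_mul_of_nonpos_left hharmonic (neg_nonpos.2 hγ₀))
    _ = ((m : ℝ) + 1) ^ (-γ) := by
        rw [Real.rpow_def_of_pos (by positivity), mul_comm]

lemma rpow_le_inv_Acoef_neg {γ : ℝ} (hγ₀ : 0 ≤ γ) (hγ₁ : γ < 1) {n : ℕ} (hn : 1 ≤ n) :
    (n : ℝ) ^ γ ≤ (Acoef (-γ) (n - 1))⁻¹ := by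
  have hbound := Acoef_neg_le_rpow hγ₀ hγ₁.le (n - 1)
  rw [Nat.cast_sub hn, Nat.cast_one, sub_add_cancel, Real.rpow_neg (by positivity)] at hbound
  rw [← inv_inv ((n : ℝ) ^ γ)]
  exact inv_anti₀ (Acoef_pos (by linarith) _) hbound

lemma integral_max_zero_one_sub_abs : ∫ t in (-1 : ℝ)..1, max 0 (1 - |t|) = 1 := by
  have hcont : Continuous fun t : ℝ => max 0 (1 - |t|) := by fun_prop
  have hleft : ∫ t in (-1 : ℝ)..0, max 0 (1 - |t|) = ∫ t in (-1 : ℝ)..0, (1 + t) :=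
    intervalIntegral.integral_congr fun t ht => by
      rw [uIcc_of_le (by norm_num)] at ht
      rw [abs_of_nonpos ht.2, max_eq_right (by linarith [ht.1])]
      ring
  have hright : ∫ t in (0 : ℝ)..1, max 0 (1 - |t|) = ∫ t in (0 : ℝ)..1, (1 - t) :=
    intervalIntegral.integral_congr fun t ht => by
      rw [uIcc_of_le zero_le_one] at ht
      rw [abs_of_nonneg ht.1, max_eq_right (by linarith [ht.2])]
  rw [← intervalIntegral.integral_add_adjacent_intervals (b := 0) (hcont.intervalIntegrable _ _)
    (hcont.intervalIntegrable _ _), hleft, hright,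
    intervalIntegral.integral_add intervalIntegrable_const intervalIntegral.intervalIntegrable_id,
    intervalIntegral.integral_sub intervalIntegrable_const intervalIntegral.intervalIntegrable_id]
  norm_num [integral_id]

section Tent

variable {N i : ℕ} {x : ℝ}

lemma two_pow_succ_mul_mem_Icc (hx : x ∈ Icc ((i : ℝ) / 2 ^ (2 * N)) ((i + 1) / 2 ^ (2 * N))) :
    2 ^ (2 * N + 1) * x ∈ Icc (2 * (i : ℝ)) (2 * i + 2) := by
  have hpos : (0 : ℝ) < 2 ^ (2 * N) := by positivity
  obtain ⟨h₁, h₂⟩ := hx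
  rw [div_le_iff₀ hpos] at h₁
  rw [le_div_iff₀ hpos] at h₂
  rw [pow_succ]
  constructor <;> nlinarith

lemma tent_eq_zero_of_ne {j : ℕ} (hx : x ∈ Icc ((i : ℝ) / 2 ^ (2 * N)) ((i + 1) / 2 ^ (2 * N)))
    (hji : j ≠ i) : tent N j x = 0 := by
  obtain ⟨h₁, h₂⟩ := two_pow_succ_mul_mem_Icc hx
  refine max_eq_left (sub_nonpos.2 ?_)
  rcases hji.lt_or_gt with h | h
  · have : (j : ℝ) + 1 ≤ i := by exact_mod_cast h
    exact le_trans (by linarith) (le_abs_self _)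
  · have : (i : ℝ) + 1 ≤ j := by exact_mod_cast h
    exact le_trans (by linarith) (neg_le_abs _)

lemma integral_tent_self :
    ∫ x in (i / 2 ^ (2 * N) : ℝ)..((i + 1) / 2 ^ (2 * N)), tent N i x = 1 / (2 * 2 ^ (2 * N)) := by
  have hc : (2 : ℝ) ^ (2 * N + 1) ≠ 0 := by positivity
  have hpos : (2 : ℝ) ^ (2 * N) ≠ 0 := by positivity
  simp only [tent]
  rw [intervalIntegral.integral_comp_mul_sub (fun t => max 0 (1 - |t|)) hc,
    show (2 : ℝ) ^ (2 * N + 1) * (i / 2 ^ (2 * N)) - (2 * i + 1) = -1 by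
      rw [pow_succ]; field_simp; ring,
    show (2 : ℝ) ^ (2 * N + 1) * ((i + 1) / 2 ^ (2 * N)) - (2 * i + 1) = 1 by
      rw [pow_succ]; field_simp; ring,
    integral_max_zero_one_sub_abs, smul_eq_mul, mul_one, pow_succ]
  ring

lemma tentSum_eq_of_mem_cell (hi : i < 2 ^ (2 * N))
    (hx : x ∈ Icc ((i : ℝ) / 2 ^ (2 * N)) ((i + 1) / 2 ^ (2 * N))) :
    tentSum N x = if i = 0 then 0 else tent N i x := by
  have hterm (j : ℕ) : tent N j x = if j = i then tent N i x else 0 := by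
    split_ifs with h
    · rw [h]
    · exact tent_eq_zero_of_ne hx h
  rw [tentSum, Finset.sum_congr rfl fun j _ => hterm j, Finset.sum_ite_eq']
  have hmem : i ∈ Finset.Icc 1 (2 ^ (2 * N) - 1) ↔ i ≠ 0 := by rw [Finset.mem_Icc]; omega
  simp only [hmem, ite_not]

lemma integral_tentSum_cell (hi : i < 2 ^ (2 * N)) :
    ∫ x in (i / 2 ^ (2 * N) : ℝ)..((i + 1) / 2 ^ (2 * N)), tentSum N x =
      if i = 0 then 0 else 1 / (2 * 2 ^ (2 * N)) := by
  have hle : (i : ℝ) / 2 ^ (2 * N) ≤ (i + 1) / 2 ^ (2 * N) := by gcongr; linarith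
  rw [intervalIntegral.integral_congr fun x hx =>
    tentSum_eq_of_mem_cell hi (uIcc_of_le hle ▸ hx)]
  split_ifs
  · simp
  · exact integral_tent_self

end Tent

lemma continuous_tentSum (N : ℕ) : Continuous (tentSum N) := by
  unfold tentSum tent
  fun_prop

lemma integral_tentSum_mul_of_isDyadicStep {N : ℕ} {F : ℝ → ℝ} (hF : IsDyadicStep (2 * N) F) :
    ∫ x in (0 : ℝ)..1, tentSum N x * F x =
      (∑ i ∈ Finset.Ico (1 : ℕ) (2 ^ (2 * N)), F (i / 2 ^ (2 * N))) / (2 * 2 ^ (2 * N)) := by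
  rw [integral_mul_of_isDyadicStep ((continuous_tentSum N).intervalIntegrable 0 1) hF,
    Finset.sum_range_eq_add_Ico _ (by positivity), Finset.sum_div,
    integral_tentSum_cell (by positivity), if_pos rfl, mul_zero, zero_add]
  refine Finset.sum_congr rfl fun i hi => ?_
  obtain ⟨hi₁, hi₂⟩ := Finset.mem_Ico.1 hi
  rw [integral_tentSum_cell hi₂, if_neg (by omega)]
  ring

lemma integral_walsh_sub_mul_cesaroKernel (γ : ℝ) {n : ℕ} (hn : 4 ≤ n) :
    ∫ x in (0 : ℝ)..1, (walsh (n - 2) x - walsh (n - 4) x) * cesaroKernel γ n x =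
      (Acoef γ (n - 1))⁻¹ * -(Acoef (γ - 1) 2 + Acoef (γ - 1) 3) := by
  have hcoef (m : ℕ) : ∫ x in (0 : ℝ)..1, (walsh (n - 2) x - walsh (n - 4) x) * walsh m x =
      (if n - 2 = m then 1 else 0) - if n - 4 = m then 1 else 0 := by
    simp only [sub_mul]
    rw [intervalIntegral.integral_sub ((intervalIntegrable_walsh _ _ _).mul_of_abs_le
      (measurable_walsh m) (abs_walsh_le m)) ((intervalIntegrable_walsh _ _ _).mul_of_abs_le
      (measurable_walsh m) (abs_walsh_le m)), integral_walsh_mul_walsh, integral_walsh_mul_walsh]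
  rw [← cesaro_sum_integral_mul_walsh
    ((intervalIntegrable_walsh _ _ _).sub (intervalIntegrable_walsh _ _ _))]
  congr 1
  simp only [hcoef, Finset.sum_sub_distrib, Finset.sum_ite_eq, Finset.mem_range]
  have hsub : {n - 3, n - 2} ⊆ Finset.Icc 1 n := by
    intro k hk
    simp only [Finset.mem_insert, Finset.mem_singleton] at hk
    rw [Finset.mem_Icc]
    omega
  rw [← Finset.sum_subset hsub fun k _ hk => ?_, Finset.sum_pair (by omega),
    show n - (n - 3) = 3 by omega, show n - (n - 2) = 2 by omega]
  · simp only [if_neg (show ¬n - 2 < n - 3 by omega), if_pos (show n - 4 < n - 3 by omega),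
      lt_irrefl, if_false, if_pos (show n - 4 < n - 2 by omega)]
    ring
  · simp only [Finset.mem_insert, Finset.mem_singleton] at hk
    rw [if_congr (show n - 2 < k ↔ n - 4 < k by omega) rfl rfl, sub_self, mul_zero]

lemma integral_mul_le_integral_tentSum_mul_abs {N : ℕ} {G K : ℝ → ℝ} {C : ℝ}
    (hG : IsDyadicStep (2 * N) G) (hK : IsDyadicStep (2 * N) K) (hGC : ∀ x, |G x| ≤ C)
    (hG0 : G 0 = 0) :
    ∫ x in (0 : ℝ)..1, G x * K x ≤ 2 * C * ∫ x in (0 : ℝ)..1, tentSum N x * |K x| := by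
  have hterm (y : ℝ) : G y * K y ≤ C * |K y| :=
    (le_abs_self _).trans ((abs_mul _ _).trans_le
      (mul_le_mul_of_nonneg_right (hGC y) (abs_nonneg _)))
  rw [integral_eq_sum_of_isDyadicStep (hG.mul hK),
    integral_tentSum_mul_of_isDyadicStep (hK.comp abs),
    Finset.sum_range_eq_add_Ico _ (by positivity)]
  simp only [Nat.cast_zero, zero_div, hG0, zero_mul, zero_add]
  calc (∑ i ∈ Finset.Ico (1 : ℕ) (2 ^ (2 * N)), G (i / 2 ^ (2 * N)) * K (i / 2 ^ (2 * N))) /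
        2 ^ (2 * N)
      ≤ (C * ∑ i ∈ Finset.Ico (1 : ℕ) (2 ^ (2 * N)), |K (i / 2 ^ (2 * N))|) / 2 ^ (2 * N) := by
        rw [Finset.mul_sum]
        exact div_le_div_of_nonneg_right (Finset.sum_le_sum fun i _ => hterm _) (by positivity)
    _ = _ := by field_simp

lemma integral_tentSum_mul_abs_cesaroKernel_ge {γ : ℝ} (hγ₀ : 0 < γ) (hγ₁ : γ < 1) {N : ℕ}
    (hN : 1 ≤ N) :
    γ * (1 - γ) / 8 * (2 : ℝ) ^ (2 * (N : ℝ) * γ) ≤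
      ∫ x in (0 : ℝ)..1, tentSum N x * |cesaroKernel (-γ) (2 ^ (2 * N)) x| := by
  have hn : 4 ≤ 2 ^ (2 * N) := by
    calc 4 = 2 ^ 2 := rfl
      _ ≤ 2 ^ (2 * N) := Nat.pow_le_pow_right two_pos (by omega)
  have hpow : ((2 ^ (2 * N) : ℕ) : ℝ) ^ γ = (2 : ℝ) ^ (2 * (N : ℝ) * γ) := by
    rw [Nat.cast_pow, Nat.cast_ofNat, ← Real.rpow_natCast, ← Real.rpow_mul zero_le_two]
    push_cast
    ring_nf
  have hinv := rpow_le_inv_Acoef_neg hγ₀.le hγ₁ (n := 2 ^ (2 * N)) (by omega)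
  have hbound (a b : ℕ) (x : ℝ) : |walsh a x - walsh b x| ≤ 2 :=
    (abs_sub _ _).trans (by linarith [abs_walsh_le a x, abs_walsh_le b x])
  have hcompare := integral_mul_le_integral_tentSum_mul_abs (N := N)
    ((isDyadicStep_walsh (show 2 ^ (2 * N) - 2 < 2 ^ (2 * N) by omega)).sub
      (isDyadicStep_walsh (show 2 ^ (2 * N) - 4 < 2 ^ (2 * N) by omega)))
    (isDyadicStep_cesaroKernel le_rfl (-γ)) (hbound _ _)
    (by simp only [walsh_apply_zero, sub_self])
  rw [integral_walsh_sub_mul_cesaroKernel _ hn, Acoef_two, Acoef_three] at hcompare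
  rw [hpow] at hinv
  have hγ : 0 < γ * (1 - γ) := mul_pos hγ₀ (by linarith)
  calc γ * (1 - γ) / 8 * (2 : ℝ) ^ (2 * (N : ℝ) * γ)
      ≤ (Acoef (-γ) (2 ^ (2 * N) - 1))⁻¹ * (γ * (1 - γ) / 8) := by
        rw [mul_comm]; gcongr
    _ ≤ (Acoef (-γ) (2 ^ (2 * N) - 1))⁻¹ * (γ * (1 - γ) / 8 + γ * (1 - γ) * (2 - γ) / 24) := by
        gcongr
        · exact (Real.rpow_nonneg zero_le_two _).trans hinv
        · have : 0 ≤ γ * (1 - γ) * (2 - γ) := by nlinarith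
          linarith
    _ ≤ _ := by linarith

theorem stmt19_general (α β : ℝ) (hα : α ∈ Ioo (0 : ℝ) 1) (hβ : β ∈ Ioo (0 : ℝ) 1) :
    ∃ c : ℝ, 0 < c ∧ ∀ N : ℕ, 1 ≤ N →
      cesaroMean (-α) (-β) (2 ^ (2 * N)) (2 ^ (2 * N)) (hTest α β N) 0 0 =
        (∫ x in (0 : ℝ)..1, tentSum N x * |cesaroKernel (-α) (2 ^ (2 * N)) x|) *
        (∫ y in (0 : ℝ)..1, tentSum N y * |cesaroKernel (-β) (2 ^ (2 * N)) y|) ∧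
      c * (2 : ℝ) ^ ((2 * (N : ℝ)) * (α + β)) ≤
        cesaroMean (-α) (-β) (2 ^ (2 * N)) (2 ^ (2 * N)) (hTest α β N) 0 0 := by
  obtain ⟨hα₀, hα₁⟩ := hα
  obtain ⟨hβ₀, hβ₁⟩ := hβ
  refine ⟨α * (1 - α) / 8 * (β * (1 - β) / 8), by positivity, fun N hN => ?_⟩
  have hint (γ : ℝ) : IntervalIntegrable
      (fun x => tentSum N x * Real.sign (cesaroKernel (-γ) (2 ^ (2 * N)) x)) volume 0 1 :=
    ((continuous_tentSum N).intervalIntegrable 0 1).mul_of_abs_le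
      (Real.measurable_sign.comp (measurable_cesaroKernel _ _)) fun _ => Real.abs_sign_le_one _
  have hmean : cesaroMean (-α) (-β) (2 ^ (2 * N)) (2 ^ (2 * N)) (hTest α β N) 0 0 =
      (∫ x in (0 : ℝ)..1, tentSum N x * |cesaroKernel (-α) (2 ^ (2 * N)) x|) *
        ∫ y in (0 : ℝ)..1, tentSum N y * |cesaroKernel (-β) (2 ^ (2 * N)) y| := by
    rw [show hTest α β N = fun x y =>
        (tentSum N x * Real.sign (cesaroKernel (-α) (2 ^ (2 * N)) x)) *
          (tentSum N y * Real.sign (cesaroKernel (-β) (2 ^ (2 * N)) y)) by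
        ext x y; simp only [hTest]; ring,
      cesaroMean_mul_apply_zero (hint α) (hint β)]
    simp only [mul_assoc, Real.sign_mul_self]
  have hlowα := integral_tentSum_mul_abs_cesaroKernel_ge hα₀ hα₁ hN
  have hlowβ := integral_tentSum_mul_abs_cesaroKernel_ge hβ₀ hβ₁ hN
  refine ⟨hmean, ?_⟩
  rw [hmean, mul_add, Real.rpow_add two_pos, mul_mul_mul_comm]
  exact mul_le_mul hlowα hlowβ (by positivity) ((by positivity : (0 : ℝ) ≤ _).trans hlowα)

/-- `σ^{-α,-β}_{2^{2N},2^{2N}}(0,0;h_N)` equals the product of the two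
integrals `∫ φ_N |K^{-α}|`, `∫ φ_N |K^{-β}|` and is `≥ c(α,β) 2^{2N(α+β)}`. -/
theorem stmt19 (α β : ℝ) (hα : α ∈ Ioo (0 : ℝ) 1) (hβ : β ∈ Ioo (0 : ℝ) 1)
    (hαβ : α + β < 1) :
    ∃ c : ℝ, 0 < c ∧ ∀ N : ℕ, 1 ≤ N →
      cesaroMean (-α) (-β) (2 ^ (2 * N)) (2 ^ (2 * N)) (hTest α β N) 0 0 =
        (∫ x in (0 : ℝ)..1, tentSum N x * |cesaroKernel (-α) (2 ^ (2 * N)) x|) *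
        (∫ y in (0 : ℝ)..1, tentSum N y * |cesaroKernel (-β) (2 ^ (2 * N)) y|) ∧
      c * (2 : ℝ) ^ ((2 * (N : ℝ)) * (α + β)) ≤
        cesaroMean (-α) (-β) (2 ^ (2 * N)) (2 ^ (2 * N)) (hTest α β N) 0 0 :=
  stmt19_general α β hα hβ
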